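/- Let τ > 0 and ψ₁, ψ₂ > 0. Let T_A and T_B be independent random variables where T_A is exponentially distributed with rate 1 and T_B is a piecewise exponential random variable with hazard rate ψ₁ on [0,τ) and ψ₂ on [τ,∞), i.e., T_B has density f(s) = ψ₁e^{−ψ₁s} for 0 ≤ s < τ and f(s) = ψ₂e^{−ψ₁τ−ψ₂(s−τ)} for s ≥ τ. Then the concordance coefficient satisfies κ(A,B) = P(T_A > T_B) = (ψ₁/(1+ψ₁))·(1 − e^{−(1+ψ₁)τ}) + e^{−(1+ψ₁)τ}·(ψ₂/(1+ψ₂)). In particular, writing ψⱼ = e^{βⱼ}, this gives the concordance for a piecewise proportional hazards model with exponential baseline, parameters β₁ before the changepoint τ and β₂ after, and it reduces to 1/(1+e^{−β}) when β₁ = β₂ = β. -/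

import Mathlib

open MeasureTheory ProbabilityTheory

/-- The density of a piecewise exponential distribution with changepoint `τ` and
hazard rates `ψ₁` on `[0, τ)` and `ψ₂` on `[τ, ∞)`. -/
noncomputable def piecewiseExpPDFReal (tau psi1 psi2 : ℝ) (s : ℝ) : ℝ :=
  if s < 0 then 0
  else if s < tau then psi1 * Real.exp (-psi1 * s)
  else psi2 * Real.exp (-psi1 * tau - psi2 * (s - tau))

/-- The piecewise exponential measure on `ℝ` with changepoint `τ` and rates `ψ₁, ψ₂`. -/
noncomputable def piecewiseExpMeasure (tau psi1 psi2 : ℝ) : Measure ℝ :=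
  volume.withDensity (fun s => ENNReal.ofReal (piecewiseExpPDFReal tau psi1 psi2 s))

/-!
Given `T_B = s ≥ 0`, the event `T_A > T_B` has probability `e^{-s}`, so `κ(A,B) = E[e^{-T_B}]`.
On `[0, τ)` and on `[τ, ∞)` the integrand `f(s) e^{-s}` is a single exponential,
`ψ₁ e^{-(1+ψ₁)s}` and `ψ₂ e^{(ψ₂-ψ₁)τ} e^{-(1+ψ₂)s}` respectively, and the two
elementary integrals are the two summands of the formula. When `ψ₁ = ψ₂ = ψ` they add up
to `ψ/(1+ψ)`.
-/

open Real Set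

lemma measure_lt_eq_lintegral_map_Ioi {Ω : Type*} [MeasurableSpace Ω] {μ : Measure Ω}
    [IsFiniteMeasure μ] {X Y : Ω → ℝ} (hX : AEMeasurable X μ) (hY : AEMeasurable Y μ)
    (hXY : IndepFun X Y μ) :
    μ {ω | Y ω < X ω} = ∫⁻ s, μ.map X (Ioi s) ∂μ.map Y := by
  have hS : MeasurableSet {p : ℝ × ℝ | p.1 < p.2} :=
    measurableSet_lt measurable_fst measurable_snd
  rw [show {ω | Y ω < X ω} = (fun ω => (Y ω, X ω)) ⁻¹' {p | p.1 < p.2} from rfl,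
    ← Measure.map_apply_of_aemeasurable (hY.prodMk hX) hS,
    (indepFun_iff_map_prod_eq_prod_map_map hY hX).mp hXY.symm, Measure.prod_apply hS]
  rfl

lemma expMeasure_Ioi {r x : ℝ} (hr : 0 < r) (hx : 0 ≤ x) :
    expMeasure r (Ioi x) = ENNReal.ofReal (exp (-(r * x))) := by
  have := isProbabilityMeasure_expMeasure hr
  have hle : exp (-(r * x)) ≤ 1 := exp_le_one_iff.mpr (by nlinarith)
  rw [← compl_Iic, prob_compl_eq_one_sub measurableSet_Iic, ← ofReal_cdf, cdf_expMeasure_eq hr,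
    if_pos hx, ← ENNReal.ofReal_one, ← ENNReal.ofReal_sub _ (sub_nonneg.mpr hle),
    sub_sub_cancel]

lemma integral_Ioi_exp_neg_mul {b : ℝ} (hb : 0 < b) (a : ℝ) :
    ∫ x in Ioi a, exp (-b * x) = exp (-b * a) / b := by
  rw [integral_exp_mul_Ioi (neg_neg_of_pos hb), neg_div_neg_eq]

lemma integral_Ioc_exp_neg_mul {b : ℝ} (hb : 0 < b) {a c : ℝ} (hac : a ≤ c) :
    ∫ x in Ioc a c, exp (-b * x) = (exp (-b * a) - exp (-b * c)) / b := by
  rw [← intervalIntegral.integral_of_le hac,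
    ← intervalIntegral.integral_Ioi_sub_Ioi (exp_neg_integrableOn_Ioi a hb) hac,
    integral_Ioi_exp_neg_mul hb, integral_Ioi_exp_neg_mul hb, sub_div]

section PiecewiseExp

variable {tau psi1 psi2 : ℝ}

lemma piecewiseExpPDFReal_of_neg {s : ℝ} (hs : s < 0) :
    piecewiseExpPDFReal tau psi1 psi2 s = 0 :=
  if_pos hs

lemma piecewiseExpPDFReal_nonneg (hpsi1 : 0 ≤ psi1) (hpsi2 : 0 ≤ psi2) (s : ℝ) :
    0 ≤ piecewiseExpPDFReal tau psi1 psi2 s := by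
  unfold piecewiseExpPDFReal
  split_ifs <;> positivity

lemma measurable_piecewiseExpPDFReal : Measurable (piecewiseExpPDFReal tau psi1 psi2) :=
  Measurable.ite measurableSet_Iio measurable_const
    (Measurable.ite measurableSet_Iio (by fun_prop) (by fun_prop))

lemma piecewiseExpPDFReal_mul_exp_neg_of_mem_Ico {s : ℝ} (hs : s ∈ Ico 0 tau) :
    piecewiseExpPDFReal tau psi1 psi2 s * exp (-s) = psi1 * exp (-(1 + psi1) * s) := by
  rw [piecewiseExpPDFReal, if_neg (not_lt.mpr hs.1), if_pos hs.2, mul_assoc, ← exp_add]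
  ring_nf

lemma piecewiseExpPDFReal_mul_exp_neg_of_mem_Ici (htau : 0 ≤ tau) {s : ℝ} (hs : s ∈ Ici tau) :
    piecewiseExpPDFReal tau psi1 psi2 s * exp (-s)
      = psi2 * exp ((psi2 - psi1) * tau) * exp (-(1 + psi2) * s) := by
  rw [piecewiseExpPDFReal, if_neg (not_lt.mpr (htau.trans hs)), if_neg (not_lt.mpr hs),
    mul_assoc, mul_assoc, ← exp_add, ← exp_add]
  ring_nf

lemma integrableOn_Ico_piecewiseExpPDFReal_mul_exp_neg :
    IntegrableOn (fun s => piecewiseExpPDFReal tau psi1 psi2 s * exp (-s)) (Ico 0 tau) := by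
  refine IntegrableOn.congr_fun ?_
    (fun s hs => (piecewiseExpPDFReal_mul_exp_neg_of_mem_Ico hs).symm) measurableSet_Ico
  exact (Continuous.integrableOn_Icc (by fun_prop)).mono_set Ico_subset_Icc_self

lemma integrableOn_Ici_piecewiseExpPDFReal_mul_exp_neg (htau : 0 ≤ tau) (hpsi2 : 0 < psi2) :
    IntegrableOn (fun s => piecewiseExpPDFReal tau psi1 psi2 s * exp (-s)) (Ici tau) := by
  refine IntegrableOn.congr_fun ?_
    (fun s hs => (piecewiseExpPDFReal_mul_exp_neg_of_mem_Ici htau hs).symm) measurableSet_Ici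
  rw [integrableOn_Ici_iff_integrableOn_Ioi]
  exact (exp_neg_integrableOn_Ioi tau (by linarith)).const_mul _

lemma integrable_piecewiseExpPDFReal_mul_exp_neg (htau : 0 ≤ tau) (hpsi2 : 0 < psi2) :
    Integrable (fun s => piecewiseExpPDFReal tau psi1 psi2 s * exp (-s)) := by
  refine IntegrableOn.integrable_of_forall_notMem_eq_zero (s := Ici 0) ?_ fun s hs => ?_
  · rw [← Ico_union_Ici_eq_Ici htau]
    exact integrableOn_Ico_piecewiseExpPDFReal_mul_exp_neg.union
      (integrableOn_Ici_piecewiseExpPDFReal_mul_exp_neg htau hpsi2)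
  · rw [piecewiseExpPDFReal_of_neg (not_le.mp hs), zero_mul]

lemma integral_piecewiseExpPDFReal_mul_exp_neg (htau : 0 ≤ tau) (hpsi1 : 0 < psi1)
    (hpsi2 : 0 < psi2) :
    ∫ s, piecewiseExpPDFReal tau psi1 psi2 s * exp (-s)
      = psi1 / (1 + psi1) * (1 - exp (-(1 + psi1) * tau))
        + exp (-(1 + psi1) * tau) * (psi2 / (1 + psi2)) := by
  have hvanish : ∀ s ∉ Ici (0 : ℝ), piecewiseExpPDFReal tau psi1 psi2 s * exp (-s) = 0 :=
    fun s hs => by rw [piecewiseExpPDFReal_of_neg (not_le.mp hs), zero_mul]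
  rw [← setIntegral_eq_integral_of_forall_compl_eq_zero hvanish, ← Ico_union_Ici_eq_Ici htau,
    setIntegral_union ((Iio_disjoint_Ici le_rfl).mono_left Ico_subset_Iio_self) measurableSet_Ici
      integrableOn_Ico_piecewiseExpPDFReal_mul_exp_neg
      (integrableOn_Ici_piecewiseExpPDFReal_mul_exp_neg htau hpsi2),
    setIntegral_congr_fun measurableSet_Ico fun s hs =>
      piecewiseExpPDFReal_mul_exp_neg_of_mem_Ico hs,
    setIntegral_congr_fun measurableSet_Ici fun s hs =>
      piecewiseExpPDFReal_mul_exp_neg_of_mem_Ici htau hs,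
    integral_const_mul, integral_const_mul, integral_Ico_eq_integral_Ioc,
    integral_Ici_eq_integral_Ioi, integral_Ioc_exp_neg_mul (by linarith) htau,
    integral_Ioi_exp_neg_mul (by linarith), mul_zero, exp_zero]
  have hexp : exp ((psi2 - psi1) * tau) * exp (-(1 + psi2) * tau) = exp (-(1 + psi1) * tau) := by
    rw [← exp_add]; ring_nf
  rw [← hexp]
  ring

lemma lintegral_expMeasure_one_Ioi_piecewiseExpMeasure (htau : 0 ≤ tau) (hpsi1 : 0 < psi1)
    (hpsi2 : 0 < psi2) :
    ∫⁻ s, expMeasure 1 (Ioi s) ∂piecewiseExpMeasure tau psi1 psi2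
      = ENNReal.ofReal (psi1 / (1 + psi1) * (1 - exp (-(1 + psi1) * tau))
        + exp (-(1 + psi1) * tau) * (psi2 / (1 + psi2))) := by
  have hmeas : Measurable fun s => expMeasure 1 (Ioi s) :=
    Antitone.measurable fun a b hab => measure_mono (Ioi_subset_Ioi hab)
  have hnonneg := piecewiseExpPDFReal_nonneg (tau := tau) hpsi1.le hpsi2.le
  rw [piecewiseExpMeasure, lintegral_withDensity_eq_lintegral_mul _
      measurable_piecewiseExpPDFReal.ennreal_ofReal hmeas,
    ← integral_piecewiseExpPDFReal_mul_exp_neg htau hpsi1 hpsi2,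
    ofReal_integral_eq_lintegral_ofReal (integrable_piecewiseExpPDFReal_mul_exp_neg htau hpsi2)
      (ae_of_all _ fun s => mul_nonneg (hnonneg s) (exp_pos _).le)]
  refine lintegral_congr fun s => ?_
  rcases lt_or_ge s 0 with hs | hs
  · simp [piecewiseExpPDFReal_of_neg hs]
  · rw [Pi.mul_apply, expMeasure_Ioi one_pos hs, one_mul, ENNReal.ofReal_mul (hnonneg s)]

end PiecewiseExp

lemma exp_div_one_add_exp (x : ℝ) : exp x / (1 + exp x) = 1 / (1 + exp (-x)) := by
  rw [exp_neg]
  field_simp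
  ring

/-- Concordance for a piecewise proportional hazards model with exponential baseline:
if `T_A ~ Exp(1)` and `T_B` is piecewise exponential with hazard `ψ₁` before `τ`
and `ψ₂` after `τ`, independent of `T_A`, then
`κ(A,B) = P(T_A > T_B)
  = (ψ₁/(1+ψ₁)) * (1 - e^{-(1+ψ₁)τ}) + e^{-(1+ψ₁)τ} * (ψ₂/(1+ψ₂))`.
In particular, when `ψ₁ = ψ₂ = e^β` this reduces to `1/(1 + e^{-β})`. -/
theorem concordance_piecewise_ph
    {Ω : Type*} [MeasureSpace Ω] [IsProbabilityMeasure (ℙ : Measure Ω)]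
    (TA TB : Ω → ℝ) (hTA : Measurable TA) (hTB : Measurable TB)
    (tau psi1 psi2 : ℝ) (htau : 0 < tau) (hpsi1 : 0 < psi1) (hpsi2 : 0 < psi2)
    (hAlaw : Measure.map TA ℙ = expMeasure 1)
    (hBlaw : Measure.map TB ℙ = piecewiseExpMeasure tau psi1 psi2)
    (hindep : IndepFun TA TB ℙ) :
    ℙ {ω | TA ω > TB ω} =
      ENNReal.ofReal (psi1 / (1 + psi1) * (1 - Real.exp (-(1 + psi1) * tau))
        + Real.exp (-(1 + psi1) * tau) * (psi2 / (1 + psi2))) ∧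
    (∀ beta : ℝ, psi1 = Real.exp beta → psi2 = Real.exp beta →
      psi1 / (1 + psi1) * (1 - Real.exp (-(1 + psi1) * tau))
        + Real.exp (-(1 + psi1) * tau) * (psi2 / (1 + psi2))
        = 1 / (1 + Real.exp (-beta))) := by
  refine ⟨?_, fun beta h1 h2 => ?_⟩
  · rw [← lintegral_expMeasure_one_Ioi_piecewiseExpMeasure htau.le hpsi1 hpsi2,
      ← hAlaw, ← hBlaw]
    exact measure_lt_eq_lintegral_map_Ioi hTA.aemeasurable hTB.aemeasurable hindep
  · subst h1 h2
    rw [← exp_div_one_add_exp]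
    ring
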